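/- arXiv:2002.05145 — 4 statements merged into one kernel-verified Lean document; each statement's English description precedes it below -/
import Mathlib

section
/- Let X be a measurable space, p, p' ∈ (0,1), and F_+, F_− probability measures on X. Let (X'_1,Y'_1),…,(X'_n,Y'_n) be i.i.d. from the distribution P' on X×{−1,+1} given by P'(A×{+1}) = p' F_+(A) and P'(A×{−1}) = (1−p') F_−(A). Set n'_+ = #{i : Y'_i = +1} and n'_− = n − n'_+. For a classifier g : X → {−1,+1}, define the ideally weighted empirical risk R̃_{w*,n}(g) = (p/p')(1/n)Σ_{i:Y'_i=+1} 1{g(X'_i)=−1} + ((1−p)/(1−p'))(1/n)Σ_{i:Y'_i=−1} 1{g(X'_i)=+1} and the plug-in weighted empirical risk R̃_{ŵ*,n}(g) = (p/n'_+)Σ_{i:Y'_i=+1} 1{g(X'_i)=−1} + ((1−p)/n'_−)Σ_{i:Y'_i=−1} 1{g(X'_i)=+1}. Let ε ∈ (0,1/2) with p' ∈ (ε, 1−ε). Then for every δ ∈ (0,1) and every n ≥ 2 log(2/δ)/ε², with probability at least 1−δ: 0 < n'_+ < n and, simultaneously for every measurable classifier g, |R̃_{ŵ*,n}(g) − R̃_{w*,n}(g)|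 ≤ (2/ε²)√(log(2/δ)/(2n)). -/
/-!
The two weighted risks differ only in their weights: `p / n'₊` against `p / (p' n)` on the
positive class and `(1 - p) / n'₋` against `(1 - p) / ((1 - p') n)` on the negative one. Since a
class error count is at most the class size, the difference is at most
`(p / p' + (1 - p) / (1 - p')) · |n'₊ - p' n| / n`. Hoeffding's inequality for the `n` i.i.d.
Bernoulli(`p'`) labels gives `|n'₊ - p' n| < n a` with `a = √(log (2/δ) / (2n))` outside an event
of probability `2 exp (-2 n a²) = δ`. The assumption on `n` gives `a < ε`, so on the good event
both classes are non-empty and the difference is at most `a / ε ≤ 2 a / ε²`.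
-/

open MeasureTheory

/-- The distribution on `X × Bool` described by the triplet `(p, F₊, F₋)`:
labels are encoded by `Bool` with `true ↦ +1` and `false ↦ -1`, so that
`P(A × {+1}) = p F₊(A)` and `P(A × {-1}) = (1-p) F₋(A)`. -/
noncomputable def binMeasure {X : Type*} [MeasurableSpace X]
    (p : ℝ) (Fp Fm : Measure X) : Measure (X × Bool) :=
  ENNReal.ofReal p • Fp.map (fun x => (x, true)) +
    ENNReal.ofReal (1 - p) • Fm.map (fun x => (x, false))

/-- Number of positive labels `n'₊` in the sample. -/
def nPos {X : Type*} {n : ℕ} (ω : Fin n → X × Bool) : ℕ :=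
  (Finset.univ.filter fun i => (ω i).2 = true).card

/-- `Σ_{i : Y'ᵢ = +1} 1{g(X'ᵢ) = -1}`. -/
noncomputable def posErr {X : Type*} {n : ℕ} (ω : Fin n → X × Bool) (g : X → Bool) : ℝ :=
  ∑ i, if (ω i).2 = true ∧ g (ω i).1 = false then (1:ℝ) else 0

/-- `Σ_{i : Y'ᵢ = -1} 1{g(X'ᵢ) = +1}`. -/
noncomputable def negErr {X : Type*} {n : ℕ} (ω : Fin n → X × Bool) (g : X → Bool) : ℝ :=
  ∑ i, if (ω i).2 = false ∧ g (ω i).1 = true then (1:ℝ) else 0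

open ProbabilityTheory Real

theorem measureReal_abs_sum_sub_integral_ge_le {α : Type*} [MeasurableSpace α] (μ : Measure α)
    [IsProbabilityMeasure μ] {f : α → ℝ} (hf : Measurable f) {a b : ℝ}
    (hab : ∀ x, f x ∈ Set.Icc a b) (n : ℕ) {t : ℝ} (ht : 0 ≤ t) :
    (Measure.pi fun _ : Fin n => μ).real {ω | t ≤ |∑ i, (f (ω i) - μ[f])|} ≤
      2 * exp (-2 * t ^ 2 / (n * (b - a) ^ 2)) := by
  set ν := Measure.pi fun _ : Fin n => μ
  set c : NNReal := (‖b - a‖₊ / 2) ^ 2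
  have hc : 2 * ((∑ _i : Fin n, c : NNReal) : ℝ) = n * (b - a) ^ 2 / 2 := by
    simp only [c, div_pow, Finset.sum_const, Finset.card_univ, Fintype.card_fin, nsmul_eq_mul,
      NNReal.coe_mul, NNReal.coe_natCast, NNReal.coe_div, NNReal.coe_pow, coe_nnnorm,
      Real.norm_eq_abs, sq_abs, NNReal.coe_ofNat]
    ring
  have hsub : HasSubgaussianMGF (fun x => f x - μ[f]) c μ :=
    hasSubgaussianMGF_of_mem_Icc hf.aemeasurable (ae_of_all _ hab)
  have hsub_coord (i : Fin n) (g : ℝ → ℝ) (hg : HasSubgaussianMGF (fun x => g (f x - μ[f])) c μ) :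
      HasSubgaussianMGF (fun ω : Fin n → α => g (f (ω i) - μ[f])) c ν := by
    have hmap : HasSubgaussianMGF (fun x => g (f x - μ[f])) c (ν.map (Function.eval i)) := by
      rwa [(measurePreserving_eval (fun _ : Fin n => μ) i).map_eq]
    have h := HasSubgaussianMGF.of_map
      (measurePreserving_eval (fun _ : Fin n => μ) i).measurable.aemeasurable hmap
    exact h
  have hindep (g : ℝ → ℝ) (hg : Measurable g) :
      iIndepFun (fun (i : Fin n) (ω : Fin n → α) => g (f (ω i) - μ[f])) ν :=
    iIndepFun_pi fun _ => (hg.comp (hf.sub_const _)).aemeasurable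
  have hupper := HasSubgaussianMGF.measure_sum_ge_le_of_iIndepFun (hindep id measurable_id)
    (s := Finset.univ) (fun i _ => hsub_coord i id hsub) ht
  have hlower := HasSubgaussianMGF.measure_sum_ge_le_of_iIndepFun (hindep Neg.neg measurable_neg)
    (s := Finset.univ) (fun i _ => hsub_coord i Neg.neg hsub.neg) ht
  have hsplit : {ω : Fin n → α | t ≤ |∑ i, (f (ω i) - μ[f])|} =
      {ω | t ≤ ∑ i, (f (ω i) - μ[f])} ∪ {ω | t ≤ ∑ i, -(f (ω i) - μ[f])} := by
    ext ω
    simp only [Set.mem_ofPred_eq, Set.mem_union, le_abs, Finset.sum_neg_distrib]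
  calc ν.real {ω | t ≤ |∑ i, (f (ω i) - μ[f])|}
      ≤ ν.real {ω | t ≤ ∑ i, (f (ω i) - μ[f])} + ν.real {ω | t ≤ ∑ i, -(f (ω i) - μ[f])} := by
        rw [hsplit]; exact measureReal_union_le _ _
    _ ≤ exp (-t ^ 2 / (2 * ∑ _i : Fin n, c)) + exp (-t ^ 2 / (2 * ∑ _i : Fin n, c)) :=
        add_le_add (by simpa using hupper) (by simpa using hlower)
    _ = 2 * exp (-2 * t ^ 2 / (n * (b - a) ^ 2)) := by
        rw [← two_mul, hc, div_div_eq_mul_div]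
        ring_nf

theorem ofReal_one_sub_le_measure_of_compl_subset {Ω : Type*} [MeasurableSpace Ω]
    {μ : Measure Ω} [IsProbabilityMeasure μ] {s t : Set Ω} {δ : ℝ} (hs : μ.real s ≤ δ)
    (hst : sᶜ ⊆ t) : ENNReal.ofReal (1 - δ) ≤ μ t := by
  have hcover : 1 ≤ μ.real s + μ.real t := by
    calc (1 : ℝ) = μ.real (s ∪ sᶜ) := by rw [Set.union_compl_self, probReal_univ]
      _ ≤ μ.real s + μ.real sᶜ := measureReal_union_le _ _
      _ ≤ μ.real s + μ.real t := add_le_add_right (measureReal_mono hst) _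
  rw [← ofReal_measureReal]
  exact ENNReal.ofReal_le_ofReal (by linarith)

theorem pos_and_lt_of_abs_sub_mul_le {m n : ℕ} {q a : ℝ} (hn : 0 < n) (hqa : a < q)
    (hqa' : a < 1 - q) (hdev : |(m : ℝ) - n * q| ≤ n * a) : 0 < m ∧ m < n := by
  have hn' : (0 : ℝ) < n := Nat.cast_pos.mpr hn
  obtain ⟨hlow, hup⟩ := abs_le.mp hdev
  constructor
  · have : (0 : ℝ) < m := by linarith [mul_pos hn' (sub_pos.mpr hqa)]
    exact_mod_cast this
  · have : (m : ℝ) < n := by linarith [mul_pos hn' (sub_pos.mpr hqa')]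
    exact_mod_cast this

theorem abs_div_mul_sub_div_mul_le {w m c P : ℝ} (hw : 0 ≤ w) (hm : 0 < m) (hc : 0 < c)
    (hP0 : 0 ≤ P) (hPm : P ≤ m) : |w / m * P - w / c * P| ≤ w * |c - m| / c := by
  have hfactor : w / m * P - w / c * P = w * (P / m) * (c - m) / c := by
    field_simp
  calc |w / m * P - w / c * P| = w * (P / m) * |c - m| / c := by
        rw [hfactor, abs_div, abs_mul, abs_mul, abs_of_nonneg hw,
          abs_of_nonneg (div_nonneg hP0 hm.le), abs_of_pos hc]
    _ ≤ w * 1 * |c - m| / c := by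
        gcongr
        exact div_le_one_of_le₀ hPm hm.le
    _ = w * |c - m| / c := by rw [mul_one]

section Counts

variable {X : Type*} {n : ℕ} (ω : Fin n → X × Bool) (g : X → Bool)

theorem nPos_eq_sum : (nPos ω : ℝ) = ∑ i, if (ω i).2 = true then (1 : ℝ) else 0 := by
  rw [nPos, Finset.card_filter]
  push_cast
  rfl

theorem posErr_nonneg : 0 ≤ posErr ω g :=
  Finset.sum_nonneg fun _ _ => by positivity

theorem negErr_nonneg : 0 ≤ negErr ω g :=
  Finset.sum_nonneg fun _ _ => by positivity

theorem posErr_le_nPos : posErr ω g ≤ nPos ω := by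
  rw [nPos_eq_sum]
  refine Finset.sum_le_sum fun i _ => ?_
  split_ifs <;> simp_all

theorem negErr_le_sub_nPos : negErr ω g ≤ n - nPos ω := by
  have hsum : (n : ℝ) - nPos ω = ∑ i, (1 - if (ω i).2 = true then (1 : ℝ) else 0) := by
    simp [nPos_eq_sum, Finset.sum_sub_distrib]
  rw [hsum]
  refine Finset.sum_le_sum fun i _ => ?_
  split_ifs <;> simp_all

end Counts

section BinMeasure

variable {X : Type*} [MeasurableSpace X] (Fp Fm : Measure X)

theorem isProbabilityMeasure_binMeasure [IsProbabilityMeasure Fp] [IsProbabilityMeasure Fm]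
    {p : ℝ} (hp0 : 0 ≤ p) (hp1 : p ≤ 1) : IsProbabilityMeasure (binMeasure p Fp Fm) := by
  constructor
  rw [binMeasure, Measure.add_apply, Measure.smul_apply, Measure.smul_apply,
    Measure.map_apply measurable_prodMk_right .univ,
    Measure.map_apply measurable_prodMk_right .univ]
  simp only [Set.preimage_univ, measure_univ, smul_eq_mul, mul_one]
  rw [← ENNReal.ofReal_add hp0 (by linarith), add_sub_cancel, ENNReal.ofReal_one]

theorem binMeasure_label_true [IsProbabilityMeasure Fp] (p : ℝ) :
    binMeasure p Fp Fm {z | z.2 = true} = ENNReal.ofReal p := by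
  have hmeas : MeasurableSet {z : X × Bool | z.2 = true} :=
    measurable_snd (measurableSet_singleton true)
  rw [binMeasure, Measure.add_apply, Measure.smul_apply, Measure.smul_apply,
    Measure.map_apply measurable_prodMk_right hmeas,
    Measure.map_apply measurable_prodMk_right hmeas]
  simp

theorem integral_label_binMeasure [IsProbabilityMeasure Fp] {p : ℝ} (hp0 : 0 ≤ p) :
    ∫ z, (if z.2 = true then (1 : ℝ) else 0) ∂binMeasure p Fp Fm = p := by
  have hmeas : MeasurableSet {z : X × Bool | z.2 = true} :=
    measurable_snd (measurableSet_singleton true)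
  have hind : (fun z : X × Bool => if z.2 = true then (1 : ℝ) else 0) =
      {z | z.2 = true}.indicator 1 := by
    ext z; simp [Set.indicator_apply]
  rw [hind, integral_indicator_one hmeas, measureReal_def, binMeasure_label_true,
    ENNReal.toReal_ofReal hp0]

theorem measureReal_abs_nPos_sub_ge_le [IsProbabilityMeasure Fp] [IsProbabilityMeasure Fm]
    {p : ℝ} (hp0 : 0 ≤ p) (hp1 : p ≤ 1) {n : ℕ} (hn : 0 < n) {δ : ℝ} (hδ : 0 < δ) (hδ2 : δ ≤ 2) :
    (Measure.pi fun _ : Fin n => binMeasure p Fp Fm).real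
      {ω | n * sqrt (log (2 / δ) / (2 * n)) ≤ |(nPos ω : ℝ) - n * p|} ≤ δ := by
  have := isProbabilityMeasure_binMeasure Fp Fm hp0 hp1
  have hlabel : Measurable fun z : X × Bool => if z.2 = true then (1 : ℝ) else 0 :=
    (measurable_of_finite fun b : Bool => if b = true then (1 : ℝ) else 0).comp measurable_snd
  have h := measureReal_abs_sum_sub_integral_ge_le (binMeasure p Fp Fm) hlabel (a := 0) (b := 1)
    (fun z => by split_ifs <;> simp) n (t := n * sqrt (log (2 / δ) / (2 * n))) (by positivity)
  simp only [integral_label_binMeasure Fp Fm hp0, Finset.sum_sub_distrib, ← nPos_eq_sum,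
    Finset.sum_const, Finset.card_univ, Fintype.card_fin, nsmul_eq_mul, sub_zero, one_pow,
    mul_one] at h
  refine h.trans_eq ?_
  have hlog : 0 ≤ log (2 / δ) := log_nonneg (by rw [le_div_iff₀ hδ]; linarith)
  rw [mul_pow, sq_sqrt (by positivity),
    show -2 * (n ^ 2 * (log (2 / δ) / (2 * n))) / n = -log (2 / δ) by field_simp, exp_neg,
    exp_log (div_pos two_pos hδ)]
  field_simp

end BinMeasure

section WeightedRisk

variable {X : Type*} {n : ℕ}

noncomputable def pluginWeightedRisk (p : ℝ) (ω : Fin n → X × Bool) (g : X → Bool) : ℝ :=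
  (p / (nPos ω : ℝ)) * posErr ω g + ((1 - p) / ((n : ℝ) - (nPos ω : ℝ))) * negErr ω g

noncomputable def idealWeightedRisk (p p' : ℝ) (ω : Fin n → X × Bool) (g : X → Bool) : ℝ :=
  (p / p') * (1 / (n : ℝ)) * posErr ω g + ((1 - p) / (1 - p')) * (1 / (n : ℝ)) * negErr ω g

theorem abs_pluginWeightedRisk_sub_idealWeightedRisk_le {p q a : ℝ} (hp : p ∈ Set.Icc (0 : ℝ) 1)
    (hq : q ∈ Set.Ioo (0 : ℝ) 1) (ω : Fin n → X × Bool) (g : X → Bool)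
    (hpos : 0 < nPos ω) (hneg : nPos ω < n) (hdev : |(nPos ω : ℝ) - n * q| ≤ n * a) :
    |pluginWeightedRisk p ω g - idealWeightedRisk p q ω g| ≤
      p * a / q + (1 - p) * a / (1 - q) := by
  obtain ⟨hp0, hp1⟩ := hp
  obtain ⟨hq0, hq1⟩ := hq
  rw [pluginWeightedRisk, idealWeightedRisk]
  set m : ℝ := (nPos ω : ℝ)
  have hm0 : 0 < m := Nat.cast_pos.mpr hpos
  have hmn : m < n := Nat.cast_lt.mpr hneg
  have hn : (0 : ℝ) < n := hm0.trans hmn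
  have hpos_class := abs_div_mul_sub_div_mul_le hp0 hm0 (mul_pos hq0 hn)
    (posErr_nonneg ω g) (posErr_le_nPos ω g)
  have hneg_class := abs_div_mul_sub_div_mul_le (sub_nonneg.mpr hp1) (sub_pos.mpr hmn)
    (mul_pos (sub_pos.mpr hq1) hn) (negErr_nonneg ω g) (negErr_le_sub_nPos ω g)
  have hdev_pos : |q * n - m| ≤ n * a := by rwa [abs_sub_comm, mul_comm]
  have hdev_neg : |(1 - q) * n - (n - m)| ≤ n * a := by
    rwa [show (1 - q) * n - (n - m) = m - n * q by ring]
  calc _ = |(p / m * posErr ω g - p / (q * n) * posErr ω g) +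
          ((1 - p) / (n - m) * negErr ω g - (1 - p) / ((1 - q) * n) * negErr ω g)| := by
        rw [mul_one_div, div_div, mul_one_div, div_div]
        congr 1
        ring
    _ ≤ |p / m * posErr ω g - p / (q * n) * posErr ω g| +
          |(1 - p) / (n - m) * negErr ω g - (1 - p) / ((1 - q) * n) * negErr ω g| :=
        abs_add_le _ _
    _ ≤ p * (n * a) / (q * n) + (1 - p) * (n * a) / ((1 - q) * n) := by
        gcongr
        · exact hpos_class.trans (by gcongr)
        · exact hneg_class.trans (by gcongr)
    _ = p * a / q + (1 - p) * a / (1 - q) := by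
        field_simp

end WeightedRisk

theorem plugin_vs_ideal_weighted_risk_binary_general
    {X : Type*} [MeasurableSpace X]
    (p p' : ℝ) (hp : p ∈ Set.Ioo (0:ℝ) 1)
    (Fp Fm : Measure X) [IsProbabilityMeasure Fp] [IsProbabilityMeasure Fm]
    (ε : ℝ) (hε : ε ∈ Set.Ioo (0:ℝ) (1/2)) (hp'ε : p' ∈ Set.Ioo ε (1 - ε))
    (n : ℕ) (δ : ℝ) (hδ : δ ∈ Set.Ioo (0:ℝ) 1)
    (hn : 2 * Real.log (2 / δ) / ε ^ 2 ≤ (n : ℝ)) :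
    ENNReal.ofReal (1 - δ) ≤
      (Measure.pi fun _ : Fin n => binMeasure p' Fp Fm)
        {ω | (0 < nPos ω ∧ nPos ω < n) ∧
          ∀ g : X → Bool, Measurable g →
            |((p / (nPos ω : ℝ)) * posErr ω g +
                ((1 - p) / ((n : ℝ) - (nPos ω : ℝ))) * negErr ω g) -
              ((p / p') * (1 / (n : ℝ)) * posErr ω g +
                ((1 - p) / (1 - p')) * (1 / (n : ℝ)) * negErr ω g)| ≤
            (2 / ε ^ 2) * Real.sqrt (Real.log (2 / δ) / (2 * n))} := by
  obtain ⟨hp0, hp1⟩ := hp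
  obtain ⟨hε0, -⟩ := hε
  obtain ⟨hεp', hp'ε⟩ := hp'ε
  obtain ⟨hδ0, hδ1⟩ := hδ
  set a := sqrt (log (2 / δ) / (2 * n))
  have hlog : 0 < log (2 / δ) := log_pos (by rw [lt_div_iff₀ hδ0]; linarith)
  have hn0 : 0 < n := Nat.cast_pos.mp (lt_of_lt_of_le (by positivity) hn)
  have haε : a < ε := by
    refine (sqrt_lt' hε0).mpr ((div_lt_iff₀ (by positivity)).mpr ?_)
    rw [div_le_iff₀ (by positivity)] at hn
    linarith
  have := isProbabilityMeasure_binMeasure Fp Fm (p := p') (by linarith) (by linarith)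
  refine ofReal_one_sub_le_measure_of_compl_subset
    (measureReal_abs_nPos_sub_ge_le Fp Fm (by linarith) (by linarith) hn0 hδ0 (by linarith))
    fun ω hω => ?_
  have hdev : |(nPos ω : ℝ) - n * p'| ≤ n * a := (not_le.mp (Set.notMem_ofPred_iff.mp hω)).le
  obtain ⟨hpos, hneg⟩ := pos_and_lt_of_abs_sub_mul_le hn0 (by linarith) (by linarith) hdev
  refine ⟨⟨hpos, hneg⟩, fun g _ => ?_⟩
  calc _ ≤ p * a / p' + (1 - p) * a / (1 - p') :=
        abs_pluginWeightedRisk_sub_idealWeightedRisk_le ⟨hp0.le, hp1.le⟩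
          ⟨by linarith, by linarith⟩ ω g hpos hneg hdev
    _ ≤ p * a / ε + (1 - p) * a / ε := by
        gcongr
        linarith
    _ = a / ε := by ring
    _ ≤ 2 / ε ^ 2 * a := by
        rw [show 2 / ε ^ 2 * a = 2 / ε * (a / ε) by field_simp]
        exact le_mul_of_one_le_left (div_nonneg (sqrt_nonneg _) hε0.le)
          ((one_le_div hε0).mpr (by linarith))

/-- Lemma 2: uniform control of the deviation between the plug-in
weighted empirical risk and the ideally weighted empirical risk, for binary
classification with varying class probabilities. -/
theorem plugin_vs_ideal_weighted_risk_binary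
    {X : Type*} [MeasurableSpace X]
    (p p' : ℝ) (hp : p ∈ Set.Ioo (0:ℝ) 1) (hp' : p' ∈ Set.Ioo (0:ℝ) 1)
    (Fp Fm : Measure X) [IsProbabilityMeasure Fp] [IsProbabilityMeasure Fm]
    (ε : ℝ) (hε : ε ∈ Set.Ioo (0:ℝ) (1/2)) (hp'ε : p' ∈ Set.Ioo ε (1 - ε))
    (n : ℕ) (δ : ℝ) (hδ : δ ∈ Set.Ioo (0:ℝ) 1)
    (hn : 2 * Real.log (2 / δ) / ε ^ 2 ≤ (n : ℝ)) :
    ENNReal.ofReal (1 - δ) ≤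
      (Measure.pi fun _ : Fin n => binMeasure p' Fp Fm)
        {ω | (0 < nPos ω ∧ nPos ω < n) ∧
          ∀ g : X → Bool, Measurable g →
            |((p / (nPos ω : ℝ)) * posErr ω g +
                ((1 - p) / ((n : ℝ) - (nPos ω : ℝ))) * negErr ω g) -
              ((p / p') * (1 / (n : ℝ)) * posErr ω g +
                ((1 - p) / (1 - p')) * (1 / (n : ℝ)) * negErr ω g)| ≤
            (2 / ε ^ 2) * Real.sqrt (Real.log (2 / δ) / (2 * n))} :=
  plugin_vs_ideal_weighted_risk_binary_general p p' hp Fp Fm ε hε hp'ε n δ hδ hn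
end

section
/- Positive-unlabeled learning: let X be a measurable space, p ∈ (0,1), q ∈ (0,1), F_+, F_− probability measures on X, and F = p F_+ + (1−p) F_− (so that F_+ ≪ F). Define P and P' on X×{−1,+1} by P(A×{+1}) = p F_+(A), P(A×{−1}) = (1−p) F_−(A), P'(A×{+1}) = q F_+(A), P'(A×{−1}) = (1−q) F(A). Then P is absolutely continuous with respect to P' and, for P'-almost every (x,y), (dP/dP')(x,y) = (p/q) 1{y=+1} + (1/(1−q)) 1{y=−1} − (p/(1−q)) (dF_+/dF)(x) 1{y=−1}. -/
open MeasureTheory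
open scoped ENNReal

lemma withDensity_map {α β : Type*} [MeasurableSpace α] [MeasurableSpace β]
    {ι : α → β} (hι : Measurable ι) (μ : Measure α) {f : β → ℝ≥0∞} (hf : Measurable f) :
    (μ.map ι).withDensity f = (μ.withDensity (f ∘ ι)).map ι := by
  ext s hs
  rw [withDensity_apply _ hs, Measure.map_apply hι hs, withDensity_apply _ (hι hs),
    setLIntegral_map hs hf hι]
  rfl

instance isFiniteMeasure_ofReal_smul {α : Type*} [MeasurableSpace α] (μ : Measure α)
    [IsFiniteMeasure μ] (r : ℝ) : IsFiniteMeasure (ENNReal.ofReal r • μ) :=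
  μ.smul_finite ENNReal.ofReal_ne_top

section RadonNikodym

variable {α : Type*} [MeasurableSpace α]

lemma withDensity_one_sub_rnDeriv_add (μ ρ : Measure α) [IsFiniteMeasure μ] [SigmaFinite ρ] :
    (μ + ρ).withDensity (1 - μ.rnDeriv (μ + ρ)) = ρ := by
  have hμ : μ ≪ μ + ρ := Measure.AbsolutelyContinuous.rfl.add_right ρ
  have : IsFiniteMeasure ((μ + ρ).withDensity (μ.rnDeriv (μ + ρ))) := by
    rw [Measure.withDensity_rnDeriv_eq _ _ hμ]; infer_instance
  rw [Measure.withDensity_sub measurable_one (Measure.measurable_rnDeriv _ _),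
    Measure.withDensity_rnDeriv_eq _ _ hμ, withDensity_one, add_comm, Measure.add_sub_cancel]

lemma withDensity_one_sub_smul_rnDeriv_smul_add (μ ρ : Measure α) [IsFiniteMeasure μ]
    [SigmaFinite ρ] {c : ℝ≥0∞} (hc : c ≠ ∞) :
    (c • μ + ρ).withDensity (fun x => 1 - c * μ.rnDeriv (c • μ + ρ) x) = ρ := by
  have := μ.smul_finite hc
  refine (withDensity_congr_ae ?_).trans (withDensity_one_sub_rnDeriv_add (c • μ) ρ)
  filter_upwards [Measure.rnDeriv_smul_left_of_ne_top μ (c • μ + ρ) hc] with x hx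
  simp [hx]

lemma smul_rnDeriv_smul_add_le_one (μ ρ : Measure α) [IsFiniteMeasure μ]
    [SigmaFinite ρ] {c : ℝ≥0∞} (hc : c ≠ ∞) :
    ∀ᵐ x ∂(c • μ + ρ), c * μ.rnDeriv (c • μ + ρ) x ≤ 1 := by
  have := μ.smul_finite hc
  filter_upwards [Measure.rnDeriv_le_one_of_le (Measure.le_add_right le_rfl : c • μ ≤ c • μ + ρ),
    Measure.rnDeriv_smul_left_of_ne_top μ (c • μ + ρ) hc] with x hle hx
  simpa [hx] using hle

end RadonNikodym

section BinMeasure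

variable {X : Type*} [MeasurableSpace X]

instance isFiniteMeasure_binMeasure (q : ℝ) (μ ν : Measure X) [IsFiniteMeasure μ]
    [IsFiniteMeasure ν] : IsFiniteMeasure (binMeasure q μ ν) := by
  unfold binMeasure; infer_instance

lemma binMeasure_withDensity (q : ℝ) (μ ν : Measure X) {f : X × Bool → ℝ≥0∞}
    (hf : Measurable f) :
    (binMeasure q μ ν).withDensity f =
      binMeasure q (μ.withDensity fun x => f (x, true)) (ν.withDensity fun x => f (x, false)) := by
  rw [binMeasure, binMeasure, withDensity_add_measure, withDensity_smul_measure,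
    withDensity_smul_measure, withDensity_map measurable_prodMk_right μ hf,
    withDensity_map measurable_prodMk_right ν hf]
  rfl

lemma binMeasure_congr {p q : ℝ} {μ ν μ' ν' : Measure X}
    (htrue : ENNReal.ofReal p • μ = ENNReal.ofReal q • μ')
    (hfalse : ENNReal.ofReal (1 - p) • ν = ENNReal.ofReal (1 - q) • ν') :
    binMeasure p μ ν = binMeasure q μ' ν' := by
  simp only [binMeasure, ← Measure.map_smul, htrue, hfalse]

lemma ae_binMeasure_iff {q : ℝ} (hq : q ∈ Set.Ioo (0 : ℝ) 1) {μ ν : Measure X}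
    {P : X × Bool → Prop} :
    (∀ᵐ z ∂binMeasure q μ ν, P z) ↔ (∀ᵐ x ∂μ, P (x, true)) ∧ ∀ᵐ x ∂ν, P (x, false) := by
  rw [binMeasure, ae_add_measure_iff,
    Measure.ae_ennreal_smul_measure_iff (by simpa using hq.1),
    Measure.ae_ennreal_smul_measure_iff (by simpa using hq.2),
    (measurableEmbedding_prod_mk_right true).ae_map_iff,
    (measurableEmbedding_prod_mk_right false).ae_map_iff]

end BinMeasure

section PULearning

variable {X : Type*} [MeasurableSpace X]

noncomputable def puDensity (p q : ℝ) (g : X → ℝ≥0∞) (z : X × Bool) : ℝ≥0∞ :=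
  if z.2 then ENNReal.ofReal p / ENNReal.ofReal q
  else (ENNReal.ofReal (1 - q))⁻¹ * (1 - ENNReal.ofReal p * g z.1)

lemma measurable_puDensity (p q : ℝ) {g : X → ℝ≥0∞} (hg : Measurable g) :
    Measurable (puDensity p q g) :=
  Measurable.ite (measurable_snd (measurableSet_singleton true)) measurable_const
    (measurable_const.mul ((measurable_const.mul (hg.comp measurable_fst)).const_sub 1))

lemma binMeasure_eq_withDensity_puDensity (p : ℝ) {q : ℝ} (hq : q ∈ Set.Ioo (0 : ℝ) 1)
    (Fp Fm : Measure X) [IsFiniteMeasure Fp] [IsFiniteMeasure Fm] :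
    binMeasure p Fp Fm =
      (binMeasure q Fp (ENNReal.ofReal p • Fp + ENNReal.ofReal (1 - p) • Fm)).withDensity
        (puDensity p q (Fp.rnDeriv (ENNReal.ofReal p • Fp + ENNReal.ofReal (1 - p) • Fm))) := by
  rw [binMeasure_withDensity _ _ _ (measurable_puDensity p q (Measure.measurable_rnDeriv _ _))]
  refine binMeasure_congr ?_ ?_
  · simp only [puDensity, if_true, withDensity_const, smul_smul]
    rw [ENNReal.mul_div_cancel (by simpa using hq.1) ENNReal.ofReal_ne_top]
  · simp only [puDensity, Bool.false_eq_true, if_false]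
    have hq1 : ENNReal.ofReal (1 - q) ≠ 0 := by simpa using hq.2
    erw [withDensity_smul' _ _ (ENNReal.inv_ne_top.2 hq1),
      withDensity_one_sub_smul_rnDeriv_smul_add Fp _ ENNReal.ofReal_ne_top, smul_smul,
      ENNReal.mul_inv_cancel hq1 ENNReal.ofReal_ne_top, one_smul]

lemma ae_toReal_puDensity {p q : ℝ} (hp : 0 ≤ p) (hq : q ∈ Set.Ioo (0 : ℝ) 1)
    {μ ν : Measure X} {g : X → ℝ≥0∞} (hg : ∀ᵐ x ∂ν, ENNReal.ofReal p * g x ≤ 1) :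
    ∀ᵐ z ∂binMeasure q μ ν, (puDensity p q g z).toReal =
      (p / q) * (if z.2 = true then (1:ℝ) else 0) +
        (1 / (1 - q)) * (if z.2 = false then (1:ℝ) else 0) -
        (p / (1 - q)) * (g z.1).toReal * (if z.2 = false then (1:ℝ) else 0) := by
  refine (ae_binMeasure_iff hq).2 ⟨ae_of_all _ fun x => ?_, ?_⟩
  · simp [puDensity, ENNReal.toReal_div, ENNReal.toReal_ofReal hp, ENNReal.toReal_ofReal hq.1.le]
  · filter_upwards [hg] with x hx
    simp only [puDensity, Bool.false_eq_true, if_false, if_true]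
    rw [ENNReal.toReal_mul, ENNReal.toReal_inv, ENNReal.toReal_ofReal (by linarith [hq.2]),
      ENNReal.toReal_sub_of_le hx ENNReal.one_ne_top, ENNReal.toReal_mul,
      ENNReal.toReal_ofReal hp, ENNReal.toReal_one]
    field_simp
    ring

end PULearning

/-- in the PU problem, with test distribution `P = (p, F₊, F₋)`
and training distribution `P' = (q, F₊, F)` where `F = p F₊ + (1-p) F₋`, one has
`P ≪ P'` and `dP/dP'(x,y) = (p/q)1{y=+1} + (1/(1-q))1{y=-1}
- (p/(1-q))(dF₊/dF)(x)1{y=-1}` for `P'`-a.e. `(x,y)`. -/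
theorem rnDeriv_pu_learning
    {X : Type*} [MeasurableSpace X]
    (p q : ℝ) (hp : p ∈ Set.Ioo (0:ℝ) 1) (hq : q ∈ Set.Ioo (0:ℝ) 1)
    (Fp Fm : Measure X) [IsProbabilityMeasure Fp] [IsProbabilityMeasure Fm] :
    binMeasure p Fp Fm ≪
        binMeasure q Fp (ENNReal.ofReal p • Fp + ENNReal.ofReal (1 - p) • Fm) ∧
      ∀ᵐ z : X × Bool
          ∂(binMeasure q Fp (ENNReal.ofReal p • Fp + ENNReal.ofReal (1 - p) • Fm)),
        ((binMeasure p Fp Fm).rnDeriv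
            (binMeasure q Fp (ENNReal.ofReal p • Fp + ENNReal.ofReal (1 - p) • Fm))
            z).toReal =
          (p / q) * (if z.2 = true then (1:ℝ) else 0) +
            (1 / (1 - q)) * (if z.2 = false then (1:ℝ) else 0) -
            (p / (1 - q)) *
              ((Fp.rnDeriv (ENNReal.ofReal p • Fp + ENNReal.ofReal (1 - p) • Fm)
                  z.1).toReal) *
              (if z.2 = false then (1:ℝ) else 0) := by
  set F := ENNReal.ofReal p • Fp + ENNReal.ofReal (1 - p) • Fm
  have hP := binMeasure_eq_withDensity_puDensity p hq Fp Fm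
  have hmeas := measurable_puDensity p q (Measure.measurable_rnDeriv Fp F)
  refine ⟨hP ▸ withDensity_absolutelyContinuous _ _, ?_⟩
  filter_upwards [hP ▸ Measure.rnDeriv_withDensity _ hmeas,
    ae_toReal_puDensity hp.1.le hq (smul_rnDeriv_smul_add_le_one Fp _ ENNReal.ofReal_ne_top)]
    with z hz_rnDeriv hz_toReal
  rw [hz_rnDeriv, hz_toReal]
end

section
/- Let X be a measurable space, p, p̃ ∈ (0,1), F_+, F_− probability measures on X, μ = p F_+ + (1−p) F_−, μ̃ = p̃ F_+ + (1−p̃) F_−, and let η : X → [0,1] be measurable with ∫_A η dμ = p F_+(A) for every measurable A (i.e. η is a version of the posterior probability of the label +1 under the model (p, F_+, F_−)). Define the distributions P and P̃ on X×{−1,+1} by P(A×{+1}) = ∫_A η dμ, P(A×{−1}) = ∫_A (1−η) dμ, P̃(A×{+1}) = ∫_A η dμ̃, P̃(A×{−1}) = ∫_A (1−η) dμ̃. Then for every measurable classifier g : X → {−1,+1}, |R_P̃(g) − R_P(g)| ≤ 2|p̃ − p|, where R_Q(g) = Q{(x,y) : g(x) ≠ y}. -/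
open MeasureTheory

/-!
Both risks are integrals of the same pointwise conditional risk `r(x) ∈ [0,1]`, against the
mixtures `p F₊ + (1-p) F₋` and `p̃ F₊ + (1-p̃) F₋`. The risk is therefore affine in the prior:
`R(q) = q a + (1-q) b` with `a = ∫ r dF₊` and `b = ∫ r dF₋` in `[0,1]`, so
`|R(p̃) - R(p)| = |p̃ - p| |a - b| ≤ |p̃ - p|`.
-/

/-- The distribution on `X × Bool` with feature marginal `μ` and posterior
probability `η` of the label `+1` (labels encoded by `Bool`, `true ↦ +1`):
`P(A × {+1}) = ∫_A η dμ` and `P(A × {-1}) = ∫_A (1-η) dμ`. -/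
noncomputable def postMeasure {X : Type*} [MeasurableSpace X]
    (μ : Measure X) (η : X → ℝ) : Measure (X × Bool) :=
  (μ.withDensity fun x => ENNReal.ofReal (η x)).map (fun x => (x, true)) +
    (μ.withDensity fun x => ENNReal.ofReal (1 - η x)).map (fun x => (x, false))

noncomputable def condRisk {X : Type*} (η : X → ℝ) (g : X → Bool) (x : X) : ENNReal :=
  if g x then ENNReal.ofReal (1 - η x) else ENNReal.ofReal (η x)

lemma condRisk_le_one {X : Type*} {η : X → ℝ} (hη : ∀ x, η x ∈ Set.Icc (0:ℝ) 1)
    (g : X → Bool) (x : X) : condRisk η g x ≤ 1 := by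
  obtain ⟨h0, h1⟩ := hη x
  unfold condRisk
  split_ifs <;> rw [ENNReal.ofReal_le_one] <;> linarith

lemma postMeasure_misclassified {X : Type*} [MeasurableSpace X]
    (μ : Measure X) (η : X → ℝ) {g : X → Bool} (hg : Measurable g) :
    postMeasure μ η {z : X × Bool | g z.1 ≠ z.2} = ∫⁻ x, condRisk η g x ∂μ := by
  have hS : MeasurableSet {z : X × Bool | g z.1 ≠ z.2} :=
    (measurableSet_eq_fun (hg.comp measurable_fst) measurable_snd).compl
  have hT : MeasurableSet {x : X | g x = true} := hg (measurableSet_singleton true)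
  have hpos : (fun x : X => (x, true)) ⁻¹' {z | g z.1 ≠ z.2} = {x | g x = true}ᶜ := by
    ext x; simp
  have hneg : (fun x : X => (x, false)) ⁻¹' {z | g z.1 ≠ z.2} = {x | g x = true} := by
    ext x; simp
  have hfalse : ∫⁻ x in {x | g x = true}ᶜ, ENNReal.ofReal (η x) ∂μ
      = ∫⁻ x in {x | g x = true}ᶜ, condRisk η g x ∂μ :=
    setLIntegral_congr_fun hT.compl fun x hx => by simp_all [condRisk]
  have htrue : ∫⁻ x in {x | g x = true}, ENNReal.ofReal (1 - η x) ∂μ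
      = ∫⁻ x in {x | g x = true}, condRisk η g x ∂μ :=
    setLIntegral_congr_fun hT fun x hx => by simp_all [condRisk]
  rw [postMeasure, Measure.add_apply, Measure.map_apply (by fun_prop) hS,
    Measure.map_apply (by fun_prop) hS, hpos, hneg, withDensity_apply _ hT.compl,
    withDensity_apply _ hT, hfalse, htrue, add_comm, lintegral_add_compl _ hT]

lemma toReal_lintegral_mixture {X : Type*} [MeasurableSpace X] {μ ν : Measure X}
    {f : X → ENNReal} (hμ : ∫⁻ x, f x ∂μ ≠ ⊤) (hν : ∫⁻ x, f x ∂ν ≠ ⊤)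
    {q : ℝ} (hq0 : 0 ≤ q) (hq1 : q ≤ 1) :
    (∫⁻ x, f x ∂(ENNReal.ofReal q • μ + ENNReal.ofReal (1 - q) • ν)).toReal =
      q * (∫⁻ x, f x ∂μ).toReal + (1 - q) * (∫⁻ x, f x ∂ν).toReal := by
  rw [lintegral_add_measure, lintegral_smul_measure, lintegral_smul_measure, smul_eq_mul,
    smul_eq_mul, ENNReal.toReal_add (ENNReal.mul_ne_top ENNReal.ofReal_ne_top hμ)
      (ENNReal.mul_ne_top ENNReal.ofReal_ne_top hν),
    ENNReal.toReal_mul, ENNReal.toReal_mul, ENNReal.toReal_ofReal hq0,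
    ENNReal.toReal_ofReal (sub_nonneg.2 hq1)]

lemma lintegral_le_one_of_le_one {X : Type*} [MeasurableSpace X] (μ : Measure X)
    [IsProbabilityMeasure μ] {f : X → ENNReal} (hf : ∀ x, f x ≤ 1) : ∫⁻ x, f x ∂μ ≤ 1 :=
  (lintegral_mono hf).trans_eq (by simp)

lemma abs_sub_convex_combination_le {a b q q' : ℝ} (ha0 : 0 ≤ a) (ha1 : a ≤ 1)
    (hb0 : 0 ≤ b) (hb1 : b ≤ 1) :
    |(q' * a + (1 - q') * b) - (q * a + (1 - q) * b)| ≤ |q' - q| := by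
  have hab : |a - b| ≤ 1 := abs_le.2 ⟨by linarith, by linarith⟩
  calc |(q' * a + (1 - q') * b) - (q * a + (1 - q) * b)| = |q' - q| * |a - b| := by
        rw [← abs_mul]; ring_nf
    _ ≤ |q' - q| := mul_le_of_le_one_right (abs_nonneg _) hab

theorem risk_stability_inaccurate_prior_general
    {X : Type*} [MeasurableSpace X]
    (p ptil : ℝ) (hp : p ∈ Set.Ioo (0:ℝ) 1) (hptil : ptil ∈ Set.Ioo (0:ℝ) 1)
    (Fp Fm : Measure X) [IsProbabilityMeasure Fp] [IsProbabilityMeasure Fm]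
    (η : X → ℝ) (hη01 : ∀ x, η x ∈ Set.Icc (0:ℝ) 1)
    (g : X → Bool) (hg : Measurable g) :
    |((postMeasure (ENNReal.ofReal ptil • Fp + ENNReal.ofReal (1 - ptil) • Fm) η)
        {z : X × Bool | g z.1 ≠ z.2}).toReal -
      ((postMeasure (ENNReal.ofReal p • Fp + ENNReal.ofReal (1 - p) • Fm) η)
        {z : X × Bool | g z.1 ≠ z.2}).toReal| ≤
    2 * |ptil - p| := by
  have hFp := lintegral_le_one_of_le_one Fp (condRisk_le_one hη01 g)
  have hFm := lintegral_le_one_of_le_one Fm (condRisk_le_one hη01 g)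
  have hFp_top := ne_top_of_le_ne_top ENNReal.one_ne_top hFp
  have hFm_top := ne_top_of_le_ne_top ENNReal.one_ne_top hFm
  rw [postMeasure_misclassified _ _ hg, postMeasure_misclassified _ _ hg,
    toReal_lintegral_mixture hFp_top hFm_top hptil.1.le hptil.2.le,
    toReal_lintegral_mixture hFp_top hFm_top hp.1.le hp.2.le]
  calc _ ≤ |ptil - p| := abs_sub_convex_combination_le ENNReal.toReal_nonneg
          (ENNReal.toReal_le_of_le_ofReal zero_le_one (by simpa using hFp))
          ENNReal.toReal_nonneg (ENNReal.toReal_le_of_le_ofReal zero_le_one (by simpa using hFm))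
    _ ≤ 2 * |ptil - p| := by linarith [abs_nonneg (ptil - p)]

/-- inaccurate prior information about the test class probability.
If `P` and `P̃` share the posterior probability `η` but have feature marginals
`μ = p F₊ + (1-p) F₋` and `μ̃ = p̃ F₊ + (1-p̃) F₋` respectively, then the
classification risks of any measurable classifier differ by at most `2|p̃ - p|`. -/
theorem risk_stability_inaccurate_prior
    {X : Type*} [MeasurableSpace X]
    (p ptil : ℝ) (hp : p ∈ Set.Ioo (0:ℝ) 1) (hptil : ptil ∈ Set.Ioo (0:ℝ) 1)
    (Fp Fm : Measure X) [IsProbabilityMeasure Fp] [IsProbabilityMeasure Fm]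
    (η : X → ℝ) (hηmeas : Measurable η) (hη01 : ∀ x, η x ∈ Set.Icc (0:ℝ) 1)
    (hpost : ∀ A : Set X, MeasurableSet A →
      ∫ x in A, η x ∂(ENNReal.ofReal p • Fp + ENNReal.ofReal (1 - p) • Fm : Measure X) =
        p * (Fp A).toReal)
    (g : X → Bool) (hg : Measurable g) :
    |((postMeasure (ENNReal.ofReal ptil • Fp + ENNReal.ofReal (1 - ptil) • Fm) η)
        {z : X × Bool | g z.1 ≠ z.2}).toReal -
      ((postMeasure (ENNReal.ofReal p • Fp + ENNReal.ofReal (1 - p) • Fm) η)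
        {z : X × Bool | g z.1 ≠ z.2}).toReal| ≤
    2 * |ptil - p| :=
  risk_stability_inaccurate_prior_general p ptil hp hptil Fp Fm η hη01 g hg
end

section
/- Stratified reweighting, deterministic bound: let K ≥ 1, ε ∈ (0,1/2), p_k ∈ [0,1] and p'_k ∈ (ε, 1−ε) for k = 1,…,K, Θ a parameter set, ℓ : Θ × Z → [0,L] a bounded loss on Z = X×{1,…,K}, and let Z'_1 = (X'_1,S'_1),…,Z'_n = (X'_n,S'_n) be points of Z with n'_k = #{i : S'_i = k} > 0 for all k. Define R̃_{w*,n}(θ) = (1/n)Σ_{i=1}^n ℓ(θ,Z'_i) Σ_k 1{S'_i=k} p_k/p'_k and R̃_{ŵ*,n}(θ) = Σ_{i=1}^n ℓ(θ,Z'_i) Σ_k 1{S'_i=k} p_k/n'_k. Then for every θ ∈ Θ, |R̃_{ŵ*,n}(θ) − R̃_{w*,n}(θ)| ≤ (L/ε²) Σ_{k=1}^K |n'_k/n − p'_k| · p_k · (1 + |n'_k/n − p'_k|/(n'_k/n)). -/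
/-!
Grouping the sample by strata, both risks are of the form `∑ₖ cₖ Sₖ`, where `Sₖ ∈ [0, L n'ₖ]` is
the total loss of stratum `k`. The plug-in and ideal weights differ by
`pₖ (1/n'ₖ - 1/(n p'ₖ)) = (pₖ / n'ₖ) (p'ₖ - n'ₖ/n) / p'ₖ`, so stratum `k` contributes at most
`L pₖ |n'ₖ/n - p'ₖ| / p'ₖ ≤ (L/ε²) pₖ |n'ₖ/n - p'ₖ|` as `ε² < ε < p'ₖ`;
the remaining factor `1 + …` is at least 1.
-/

/-- Number `n'ₖ` of sample points in stratum `k`. -/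
def nStratum {X : Type*} {K n : ℕ} (ω : Fin n → X × Fin K) (k : Fin K) : ℕ :=
  (Finset.univ.filter fun i => (ω i).2 = k).card

open Finset

theorem sum_mul_sum_ite_eq_sum_mul_sum_fiber {ι κ R : Type*} [Fintype ι] [Fintype κ]
    [DecidableEq κ] [CommSemiring R] (f : ι → R) (g : ι → κ) (c : κ → R) :
    ∑ i, f i * ∑ k, (if g i = k then c k else 0) = ∑ k, c k * ∑ i with g i = k, f i := by
  simp only [sum_ite_eq, mem_univ, if_true, mul_sum]
  rw [← sum_fiberwise univ g]
  refine sum_congr rfl fun k _ => sum_congr rfl fun i hi => ?_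
  rw [(mem_filter.mp hi).2, mul_comm]

theorem abs_stratum_plugin_sub_ideal_le {P q a n S L : ℝ} (hP : 0 ≤ P) (hq : 0 < q)
    (ha : 0 < a) (hn : 0 < n) (hS : 0 ≤ S) (hSL : S ≤ L * a) :
    |P / a * S - 1 / n * (P / q * S)| ≤ L / q * (|a / n - q| * P) := by
  have hdiff : P / a * S - 1 / n * (P / q * S) = P * S * (q - a / n) / (a * q) := by
    field_simp
  rw [hdiff, abs_div, abs_mul, abs_of_nonneg (mul_nonneg hP hS), abs_sub_comm,
    abs_of_pos (mul_pos ha hq), div_le_iff₀ (mul_pos ha hq)]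
  calc P * S * |a / n - q| ≤ P * (L * a) * |a / n - q| := by gcongr
    _ = L / q * (|a / n - q| * P) * (a * q) := by field_simp

theorem plugin_vs_ideal_stratified_deterministic_general
    {X : Type*} {Θ : Type*}
    (K : ℕ) (ε : ℝ) (hε : ε ∈ Set.Ioo (0:ℝ) (1/2))
    (p p' : Fin K → ℝ)
    (hp : ∀ k, p k ∈ Set.Icc (0:ℝ) 1) (hp' : ∀ k, p' k ∈ Set.Ioo ε (1 - ε))
    (L : ℝ) (ℓ : Θ → X × Fin K → ℝ)
    (hℓnonneg : ∀ θ z, 0 ≤ ℓ θ z) (hℓle : ∀ θ z, ℓ θ z ≤ L)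
    (n : ℕ) (ω : Fin n → X × Fin K)
    (hpos : ∀ k, 0 < nStratum ω k)
    (θ : Θ) :
    |(∑ i, ℓ θ (ω i) *
        ∑ k, if (ω i).2 = k then p k / (nStratum ω k : ℝ) else 0) -
      (1 / (n : ℝ)) * ∑ i, ℓ θ (ω i) *
        ∑ k, if (ω i).2 = k then p k / p' k else 0| ≤
    (L / ε ^ 2) * ∑ k, |(nStratum ω k : ℝ) / n - p' k| * p k *
      (1 + |(nStratum ω k : ℝ) / n - p' k| / ((nStratum ω k : ℝ) / n)) := by
  rw [sum_mul_sum_ite_eq_sum_mul_sum_fiber, sum_mul_sum_ite_eq_sum_mul_sum_fiber, mul_sum,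
    ← sum_sub_distrib, mul_sum]
  refine (abs_sum_le_sum_abs _ _).trans (sum_le_sum fun k _ => ?_)
  obtain ⟨i₀, -⟩ := card_pos.mp (hpos k)
  have hL : 0 ≤ L := (hℓnonneg θ (ω i₀)).trans (hℓle θ (ω i₀))
  have hn : (0:ℝ) < n := by
    exact_mod_cast (hpos k).trans_le ((card_filter_le _ _).trans (card_fin n).le)
  have hS : ∑ i with (ω i).2 = k, ℓ θ (ω i) ≤ L * nStratum ω k := by
    rw [mul_comm, nStratum, ← nsmul_eq_mul]
    exact sum_le_card_nsmul _ _ _ fun i _ => hℓle θ (ω i)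
  have hε2 : ε ^ 2 ≤ p' k := by nlinarith [hε.1, hε.2, (hp' k).1]
  have hdp : 0 ≤ |(nStratum ω k : ℝ) / n - p' k| * p k := mul_nonneg (abs_nonneg _) (hp k).1
  calc _ ≤ L / p' k * (|(nStratum ω k : ℝ) / n - p' k| * p k) :=
        abs_stratum_plugin_sub_ideal_le (hp k).1 (hε.1.trans (hp' k).1)
          (by exact_mod_cast hpos k) hn (sum_nonneg fun i _ => hℓnonneg θ (ω i)) hS
    _ ≤ L / ε ^ 2 * (|(nStratum ω k : ℝ) / n - p' k| * p k) := by
        gcongr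
        exact pow_pos hε.1 2
    _ ≤ _ := mul_le_mul_of_nonneg_left
        (le_mul_of_one_le_right hdp (le_add_of_nonneg_right (by positivity))) (by positivity)

/-- deterministic bound on the deviation between the plug-in
weighted empirical risk (weights `p k / n'ₖ`) and the ideally weighted one
(weights `p k / p' k`) in the stratified setting, valid for any fixed sample in
which every stratum is represented. -/
theorem plugin_vs_ideal_stratified_deterministic
    {X : Type*} {Θ : Type*}
    (K : ℕ) (hK : 1 ≤ K) (ε : ℝ) (hε : ε ∈ Set.Ioo (0:ℝ) (1/2))
    (p p' : Fin K → ℝ)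
    (hp : ∀ k, p k ∈ Set.Icc (0:ℝ) 1) (hp' : ∀ k, p' k ∈ Set.Ioo ε (1 - ε))
    (L : ℝ) (ℓ : Θ → X × Fin K → ℝ)
    (hℓnonneg : ∀ θ z, 0 ≤ ℓ θ z) (hℓle : ∀ θ z, ℓ θ z ≤ L)
    (n : ℕ) (ω : Fin n → X × Fin K)
    (hpos : ∀ k, 0 < nStratum ω k)
    (θ : Θ) :
    |(∑ i, ℓ θ (ω i) *
        ∑ k, if (ω i).2 = k then p k / (nStratum ω k : ℝ) else 0) -
      (1 / (n : ℝ)) * ∑ i, ℓ θ (ω i) *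
        ∑ k, if (ω i).2 = k then p k / p' k else 0| ≤
    (L / ε ^ 2) * ∑ k, |(nStratum ω k : ℝ) / n - p' k| * p k *
      (1 + |(nStratum ω k : ℝ) / n - p' k| / ((nStratum ω k : ℝ) / n)) :=
  plugin_vs_ideal_stratified_deterministic_general K ε hε p p' hp hp' L ℓ hℓnonneg hℓle n ω hpos θ
end
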